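/- arXiv:1611.06708 — 4 statements merged into one kernel-verified Lean document; each statement's English description precedes it below -/
import Mathlib

section
/- Let a, b, x be real numbers and Δ ∈ (0,1). If b ∈ (a − Δ², a + Δ²), 0 ∉ (a − Δ, a + Δ), and x ∉ (a − 2Δ, a + 2Δ), then |(1 − x/a) / (1 − x/b)| ≤ (1 + Δ)². -/
/-!
Write the quotient as `(b / a) * ((a - x) / (b - x))`. Each factor is a ratio `u / v` with
`|u - v| ≤ Δ |v|`: for the first, `|b - a| < Δ² ≤ Δ |a|`; for the second, `|(a - x) - (b - x)| < Δ²`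
while `|b - x| ≥ 2Δ - Δ² ≥ Δ`. Such a ratio has modulus at most `1 + Δ`.
-/

open Set

lemma mem_Ioo_iff_abs_sub_lt {a r x : ℝ} : x ∈ Ioo (a - r) (a + r) ↔ |x - a| < r := by
  rw [← Real.ball_eq_Ioo, Metric.mem_ball, Real.dist_eq]

lemma abs_div_le_one_add {K : Type*} [Field K] [LinearOrder K] [IsStrictOrderedRing K]
    {u v δ : K} (hδ : 0 ≤ δ) (h : |u - v| ≤ δ * |v|) : |u / v| ≤ 1 + δ := by
  rcases eq_or_ne v 0 with rfl | hv
  · simp only [div_zero, abs_zero]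
    linarith
  rw [abs_div, div_le_iff₀ (abs_pos.mpr hv)]
  linarith [abs_sub_abs_le_abs_sub u v]

theorem stmt0 (a b x Δ : ℝ) (hΔ : Δ ∈ Set.Ioo (0:ℝ) 1)
    (hb : b ∈ Set.Ioo (a - Δ^2) (a + Δ^2))
    (h0 : (0:ℝ) ∉ Set.Ioo (a - Δ) (a + Δ))
    (hx : x ∉ Set.Ioo (a - 2*Δ) (a + 2*Δ)) :
    |(1 - x/a) / (1 - x/b)| ≤ (1 + Δ)^2 := by
  obtain ⟨hΔ0, hΔ1⟩ := hΔ
  rw [mem_Ioo_iff_abs_sub_lt] at hb h0 hx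
  rw [not_lt, zero_sub, abs_neg] at h0
  rw [not_lt] at hx
  have hΔ_sq : Δ ^ 2 ≤ Δ := by nlinarith
  have hbx : Δ ≤ |b - x| := by
    have := abs_sub_abs_le_abs_sub (x - a) (x - b)
    rw [abs_sub_comm x b, show x - a - (x - b) = b - a by ring] at this
    linarith
  have hb0 : b ≠ 0 := by
    rintro rfl
    rw [zero_sub, abs_neg] at hb
    linarith
  have hfactor : (1 - x / a) / (1 - x / b) = b / a * ((a - x) / (b - x)) := by
    have ha0 : a ≠ 0 := by rintro rfl; rw [abs_zero] at h0; linarith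
    have hbx0 : b - x ≠ 0 := by intro h; rw [h, abs_zero] at hbx; linarith
    field_simp
  have hba : |b / a| ≤ 1 + Δ :=
    abs_div_le_one_add hΔ0.le (by nlinarith)
  have hax : |(a - x) / (b - x)| ≤ 1 + Δ :=
    abs_div_le_one_add hΔ0.le (by
      rw [show a - x - (b - x) = -(b - a) by ring, abs_neg]; nlinarith)
  rw [hfactor, abs_mul, sq]
  exact mul_le_mul hba hax (abs_nonneg _) (by linarith)
end

section
/- Let ε ∈ (0, 1/(2e)), C > 0, and let f : ℂ → ℂ be entire with |f(z)| ≤ C·e^{ε|z|} for all z ∈ ℂ. If λ ∈ ℂ satisfies f(λ) = 0, then the entire function g(z) = f(z)/(z − λ) (extended by g(λ) = f′(λ)) satisfies |g(z)| ≤ C·e^{ε|z|} for all z ∈ ℂ. -/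
/-!
Put `R = 1/(2ε)`. Where `‖z - λ‖ ≥ R` the division by `z - λ` gains the factor `2ε`. Inside the
disk of radius `R` about `λ`, the maximum modulus principle compares `g z` with the values of `g`
on the boundary circle, whose points satisfy `‖w‖ ≤ ‖z‖ + 2R`; passing to them costs the factor
`e^{2εR} = e`, and this is absorbed because `2εe < 1`.
-/

open Real

theorem norm_dslope_le_div_of_apply_eq_zero {𝕜 E : Type*} [NontriviallyNormedField 𝕜]
    [NormedAddCommGroup E] [NormedSpace 𝕜 E] {f : 𝕜 → E} {a w : 𝕜} {B R : ℝ}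
    (ha : f a = 0) (hR : 0 < R) (hw : R ≤ ‖w - a‖) (hB : ‖f w‖ ≤ B) :
    ‖dslope f a w‖ ≤ B / R := by
  have hwa : w ≠ a := by
    rintro rfl
    simp only [sub_self, norm_zero] at hw
    linarith
  rw [dslope_of_ne f hwa, slope_def_module, ha, sub_zero, norm_smul, norm_inv, ← div_eq_inv_mul]
  exact div_le_div₀ ((norm_nonneg _).trans hB) hB hR hw

theorem norm_le_mul_exp_of_norm_le_off_ball {F : Type*} [NormedAddCommGroup F]
    [NormedSpace ℂ F] {g : ℂ → F} (hg : Differentiable ℂ g) {l : ℂ} {K ε R : ℝ} (hK : 0 ≤ K) (hε : 0 ≤ ε) (hR : 0 ≤ R)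
    (hout : ∀ w, R ≤ ‖w - l‖ → ‖g w‖ ≤ K * exp (ε * ‖w‖)) (z : ℂ) :
    ‖g z‖ ≤ K * exp (2 * ε * R) * exp (ε * ‖z‖) := by
  rw [mul_assoc, ← exp_add]
  by_cases hz : R ≤ ‖z - l‖
  · refine (hout z hz).trans (mul_le_mul_of_nonneg_left (exp_le_exp.mpr ?_) hK)
    nlinarith
  rw [not_le] at hz
  have hRpos : 0 < R := (norm_nonneg _).trans_lt hz
  have hsphere :
      ∀ w ∈ frontier (Metric.ball l R), ‖g w‖ ≤ K * exp (2 * ε * R + ε * ‖z‖) := by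
    intro w hw
    rw [frontier_ball l hRpos.ne', mem_sphere_iff_norm] at hw
    have hwz : ‖w‖ ≤ ‖z‖ + 2 * R := by
      have := norm_sub_le_norm_sub_add_norm_sub w l z
      rw [norm_sub_rev l z] at this
      linarith [norm_le_norm_add_norm_sub' w z]
    refine (hout w hw.ge).trans (mul_le_mul_of_nonneg_left (exp_le_exp.mpr ?_) hK)
    nlinarith
  exact Complex.norm_le_of_forall_mem_frontier_norm_le Metric.isBounded_ball
    hg.diffContOnCl hsphere (subset_closure (mem_ball_iff_norm.mpr hz))

theorem stmt2 (ε C : ℝ) (hε : ε ∈ Set.Ioo (0:ℝ) (1/(2*Real.exp 1))) (hC : 0 < C)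
    (f : ℂ → ℂ) (hf : Differentiable ℂ f)
    (hbd : ∀ z : ℂ, ‖f z‖ ≤ C * Real.exp (ε * ‖z‖))
    (l : ℂ) (hl : f l = 0)
    (g : ℂ → ℂ) (hg1 : ∀ z : ℂ, z ≠ l → g z = f z / (z - l))
    (hg2 : g l = deriv f l) :
    ∀ z : ℂ, ‖g z‖ ≤ C * Real.exp (ε * ‖z‖) := by
  obtain ⟨hε0, hεe⟩ := hε
  have hεe : 2 * ε * exp 1 < 1 := by
    rw [lt_div_iff₀ (by positivity)] at hεe
    linarith
  have hg : g = dslope f l := by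
    funext w
    rcases eq_or_ne w l with rfl | hw
    · rw [hg2, dslope_same]
    · rw [hg1 w hw, dslope_of_ne f hw, slope_def_field, hl, sub_zero]
  have hgd : Differentiable ℂ g := by
    rw [hg, ← differentiableOn_univ]
    exact (Complex.differentiableOn_dslope Filter.univ_mem).mpr hf.differentiableOn
  have hout : ∀ w, 1 / (2 * ε) ≤ ‖w - l‖ → ‖g w‖ ≤ 2 * ε * C * exp (ε * ‖w‖) := by
    intro w hw
    have := norm_dslope_le_div_of_apply_eq_zero hl (by positivity) hw (hbd w)
    rwa [← hg, div_div_eq_mul_div, div_one, mul_comm, ← mul_assoc] at this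
  intro z
  calc ‖g z‖ ≤ 2 * ε * C * exp (2 * ε * (1 / (2 * ε))) * exp (ε * ‖z‖) :=
        norm_le_mul_exp_of_norm_le_off_ball hgd (by positivity) hε0.le (by positivity) hout z
    _ = 2 * ε * exp 1 * (C * exp (ε * ‖z‖)) := by field_simp
    _ ≤ C * exp (ε * ‖z‖) := mul_le_of_le_one_left (by positivity) hεe.le
end

section
/- ∫_{-1}^{1} exp(−1/(1 − t²)) dt = (2/e) · ∫_{0}^{∞} e^{−t} √(t/(t+1)) dt. -/
/-!
The substitution `t = √(s / (s + 1))`, i.e. `s = t² / (1 - t²)`, maps `(0, ∞)` onto `(0, 1)` and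
turns `1 / (1 - t²)` into `s + 1`, so `∫₀¹ exp (-1 / (1 - t²)) dt = e⁻¹ ∫₀^∞ e⁻ˢ g'(s) ds` with
`g s = √(s / (s + 1))`. Integrating by parts moves the derivative onto `e⁻ˢ`; the boundary terms
vanish because `g 0 = 0` and `g ≤ 1`. Finally the integrand is even, so the integral over
`(-1, 1)` is twice the one over `(0, 1)`.
-/

open MeasureTheory Set Filter Topology Real

-- At `t = ±1` division by zero gives `bump t = 1` instead of the limit `0`; a null set.
noncomputable def bump (t : ℝ) : ℝ := exp (-1 / (1 - t ^ 2))

noncomputable def sqrtDivAddOne (s : ℝ) : ℝ := √(s / (s + 1))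

theorem intervalIntegral.integral_neg_self_eq_two_nsmul_of_even {E : Type*}
    [NormedAddCommGroup E] [NormedSpace ℝ E] {f : ℝ → E} {a : ℝ} (hf : ∀ x, f (-x) = f x)
    (hi : IntervalIntegrable f volume (-a) a) :
    ∫ x in -a..a, f x = 2 • ∫ x in 0..a, f x := by
  have h0 : (0 : ℝ) ∈ uIcc (-a) a := by
    rcases le_total 0 a with h | h <;> simp [h]
  have hleft : ∫ x in -a..0, f x = ∫ x in 0..a, f x := by
    simpa [hf] using (intervalIntegral.integral_comp_neg (a := 0) (b := a) f).symm
  rw [← intervalIntegral.integral_add_adjacent_intervals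
    (hi.mono_set (uIcc_subset_uIcc_left h0)) (hi.mono_set (uIcc_subset_uIcc_right h0)),
    hleft, two_nsmul]

theorem bump_neg (t : ℝ) : bump (-t) = bump t := by
  simp only [bump, neg_sq]

theorem bump_pos (t : ℝ) : 0 < bump t := exp_pos _

theorem bump_le_one {t : ℝ} (ht : t ^ 2 ≤ 1) : bump t ≤ 1 :=
  exp_le_one_iff.2 (div_nonpos_of_nonpos_of_nonneg (by norm_num) (by linarith))

theorem measurable_bump : Measurable bump := by
  unfold bump; fun_prop

theorem intervalIntegrable_bump : IntervalIntegrable bump volume (-1) 1 := by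
  rw [intervalIntegrable_iff]
  refine Measure.integrableOn_of_bounded (M := 1) measure_Ioc_lt_top.ne
    measurable_bump.aestronglyMeasurable ?_
  filter_upwards [ae_restrict_mem measurableSet_uIoc] with t ht
  rw [uIoc_of_le (by norm_num)] at ht
  rw [norm_of_nonneg (bump_pos t).le]
  exact bump_le_one (by nlinarith [ht.1, ht.2])

theorem integral_bump_eq_two_mul_integral_Ioo :
    ∫ t in (-1)..1, bump t = 2 * ∫ t in Ioo 0 1, bump t := by
  rw [intervalIntegral.integral_neg_self_eq_two_nsmul_of_even bump_neg intervalIntegrable_bump,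
    nsmul_eq_mul, Nat.cast_ofNat, intervalIntegral.integral_of_le zero_le_one,
    integral_Ioc_eq_integral_Ioo]

theorem sqrtDivAddOne_nonneg (s : ℝ) : 0 ≤ sqrtDivAddOne s := sqrt_nonneg _

theorem sqrtDivAddOne_le_one {s : ℝ} (hs : 0 ≤ s) : sqrtDivAddOne s ≤ 1 :=
  sqrt_le_one.2 ((div_le_one (by linarith)).2 (by linarith))

theorem sq_sqrtDivAddOne {s : ℝ} (hs : 0 ≤ s) : sqrtDivAddOne s ^ 2 = s / (s + 1) :=
  sq_sqrt (by positivity)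

theorem bump_sqrtDivAddOne {s : ℝ} (hs : 0 ≤ s) :
    bump (sqrtDivAddOne s) = exp (-1) * exp (-s) := by
  rw [bump, sq_sqrtDivAddOne hs, ← exp_add]
  congr 1
  field_simp
  ring

theorem hasDerivAt_sqrtDivAddOne {s : ℝ} (hs : 0 < s) :
    HasDerivAt sqrtDivAddOne (sqrtDivAddOne s / (2 * s * (s + 1))) s := by
  have hdiv : HasDerivAt (fun s : ℝ => s / (s + 1)) (1 / (s + 1) ^ 2) s := by
    refine ((hasDerivAt_id s).div ((hasDerivAt_id s).add_const 1) (by positivity)).congr_deriv ?_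
    simp only [id]
    ring
  refine ((hasDerivAt_sqrt (by positivity)).comp s hdiv).congr_deriv ?_
  have hsq := sq_sqrtDivAddOne hs.le
  have hpos : 0 < sqrtDivAddOne s := sqrt_pos.2 (by positivity)
  unfold sqrtDivAddOne at hsq hpos ⊢
  field_simp
  rw [hsq]
  field_simp

theorem strictMonoOn_sqrtDivAddOne : StrictMonoOn sqrtDivAddOne (Ici 0) := by
  intro a ha b hb hab
  have ha : (0 : ℝ) ≤ a := ha
  refine sqrt_lt_sqrt (by positivity) ?_
  rw [div_lt_div_iff₀ (by linarith) (by linarith)]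
  linarith

theorem sqrtDivAddOne_image_Ioi : sqrtDivAddOne '' Ioi 0 = Ioo 0 1 := by
  ext t
  constructor
  · rintro ⟨s, hs, rfl⟩
    have hs : (0 : ℝ) < s := hs
    refine ⟨sqrt_pos.2 (by positivity), (sqrt_lt' one_pos).2 ?_⟩
    rw [one_pow, div_lt_one (by linarith)]
    linarith
  · rintro ⟨ht0, ht1⟩
    have h : 0 < 1 - t ^ 2 := by nlinarith
    refine ⟨t ^ 2 / (1 - t ^ 2), div_pos (by positivity) h, ?_⟩
    rw [sqrtDivAddOne, show t ^ 2 / (1 - t ^ 2) / (t ^ 2 / (1 - t ^ 2) + 1) = t ^ 2 by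
      field_simp; ring, sqrt_sq ht0.le]

theorem abs_deriv_smul_bump_sqrtDivAddOne {s : ℝ} (hs : 0 < s) :
    |sqrtDivAddOne s / (2 * s * (s + 1))| • bump (sqrtDivAddOne s)
      = exp (-1) * (exp (-s) * (sqrtDivAddOne s / (2 * s * (s + 1)))) := by
  rw [abs_of_nonneg (by have := sqrtDivAddOne_nonneg s; positivity), smul_eq_mul,
    bump_sqrtDivAddOne hs.le]
  ring

theorem integrableOn_bump_Ioo : IntegrableOn bump (Ioo 0 1) :=
  intervalIntegrable_bump.1.mono_set
    (Ioo_subset_Ioc_self.trans (Ioc_subset_Ioc (by norm_num) le_rfl))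

-- The integrand blows up like `s^(-1/2)` at `0`; integrability is pulled back from `bump` instead.
theorem integrableOn_exp_neg_mul_deriv_sqrtDivAddOne :
    IntegrableOn (fun s => exp (-s) * (sqrtDivAddOne s / (2 * s * (s + 1)))) (Ioi 0) := by
  have h := (integrableOn_image_iff_integrableOn_abs_deriv_smul measurableSet_Ioi
    (fun s hs => (hasDerivAt_sqrtDivAddOne hs).hasDerivWithinAt)
    (strictMonoOn_sqrtDivAddOne.injOn.mono Ioi_subset_Ici_self) bump).1
    (sqrtDivAddOne_image_Ioi ▸ integrableOn_bump_Ioo)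
  refine IntegrableOn.congr_fun (h.const_mul (exp 1)) (fun s hs => ?_) measurableSet_Ioi
  rw [abs_deriv_smul_bump_sqrtDivAddOne hs, ← mul_assoc, ← exp_add]
  simp

theorem integral_Ioo_bump :
    ∫ t in Ioo 0 1, bump t
      = exp (-1) * ∫ s in Ioi 0, exp (-s) * (sqrtDivAddOne s / (2 * s * (s + 1))) := by
  rw [← sqrtDivAddOne_image_Ioi, integral_image_eq_integral_abs_deriv_smul measurableSet_Ioi
    (fun s hs => (hasDerivAt_sqrtDivAddOne hs).hasDerivWithinAt)
    (strictMonoOn_sqrtDivAddOne.injOn.mono Ioi_subset_Ici_self), ← integral_const_mul]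
  exact setIntegral_congr_fun measurableSet_Ioi fun s hs => abs_deriv_smul_bump_sqrtDivAddOne hs

theorem continuousAt_sqrtDivAddOne_zero : ContinuousAt sqrtDivAddOne 0 := by
  unfold sqrtDivAddOne
  exact continuous_sqrt.continuousAt.comp (continuousAt_id.div (by fun_prop) (by norm_num))

theorem norm_sqrtDivAddOne_mul_exp_neg_le {s : ℝ} (hs : 0 ≤ s) :
    ‖sqrtDivAddOne s * exp (-s)‖ ≤ exp (-s) := by
  rw [norm_of_nonneg (mul_nonneg (sqrtDivAddOne_nonneg s) (exp_pos _).le)]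
  exact mul_le_of_le_one_left (exp_pos _).le (sqrtDivAddOne_le_one hs)

theorem integral_exp_neg_mul_sqrtDivAddOne :
    ∫ s in Ioi 0, exp (-s) * sqrtDivAddOne s
      = ∫ s in Ioi 0, exp (-s) * (sqrtDivAddOne s / (2 * s * (s + 1))) := by
  have hv : ∀ s ∈ Ioi (0 : ℝ), HasDerivAt (fun s => -exp (-s)) (exp (-s)) s := fun s _ =>
    (hasDerivAt_neg s).exp.neg.congr_deriv (by ring)
  have huv' : IntegrableOn (fun s => sqrtDivAddOne s * exp (-s)) (Ioi 0) := by
    have hexp : IntegrableOn (fun s : ℝ => exp (-s)) (Ioi 0) := by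
      simpa using exp_neg_integrableOn_Ioi 0 one_pos
    refine hexp.mono' (by unfold sqrtDivAddOne; fun_prop) ?_
    filter_upwards [ae_restrict_mem measurableSet_Ioi] with s hs
    exact norm_sqrtDivAddOne_mul_exp_neg_le (le_of_lt hs)
  have hu'v :
      IntegrableOn (fun s => sqrtDivAddOne s / (2 * s * (s + 1)) * -exp (-s)) (Ioi 0) := by
    simpa [mul_comm] using integrableOn_exp_neg_mul_deriv_sqrtDivAddOne.neg
  have h_zero : Tendsto (fun s => sqrtDivAddOne s * -exp (-s)) (𝓝[>] 0) (𝓝 0) := by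
    have h := continuousAt_sqrtDivAddOne_zero.mul
      (by fun_prop : ContinuousAt (fun s : ℝ => -exp (-s)) 0)
    simpa [sqrtDivAddOne, Pi.mul_def] using h.tendsto.mono_left nhdsWithin_le_nhds
  have h_infty : Tendsto (fun s => sqrtDivAddOne s * -exp (-s)) atTop (𝓝 0) := by
    refine squeeze_zero_norm' ?_ tendsto_exp_neg_atTop_nhds_zero
    filter_upwards [eventually_ge_atTop 0] with s hs
    simpa [mul_neg] using norm_sqrtDivAddOne_mul_exp_neg_le hs
  have hparts := integral_Ioi_mul_deriv_eq_deriv_mul (fun s hs => hasDerivAt_sqrtDivAddOne hs) hv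
    huv' hu'v h_zero h_infty
  simp only [mul_neg, integral_neg, sub_neg_eq_add, sub_zero, zero_add] at hparts
  simpa only [mul_comm] using hparts

theorem stmt4 :
    ∫ t in (-1:ℝ)..1, Real.exp (-1/(1 - t^2))
      = (2/Real.exp 1) * ∫ t in Set.Ioi (0:ℝ), Real.exp (-t) * Real.sqrt (t/(t+1)) := by
  change ∫ t in (-1)..1, bump t = 2 / exp 1 * ∫ s in Ioi 0, exp (-s) * sqrtDivAddOne s
  rw [integral_bump_eq_two_mul_integral_Ioo, integral_Ioo_bump,
    integral_exp_neg_mul_sqrtDivAddOne, exp_neg]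
  ring
end

section
/- Let w : ℝ → ℝ be a bounded Borel function, F : ℝ → ℝ continuous, and A < B real numbers. Then sup_{x ∈ (A,B)} w(x)·|F(x)| = sup_{x ∈ (A,B)} M_w(x)·|F(x)|, where M_w(x) := lim_{δ↓0} sup_{y ∈ (x−δ, x+δ)} w(y) is the upper Baire function of w. -/
/-!
Since `w ≤ M_w`, only `M_w(x)·|F(x)| ≤ S` needs proof, where `S` is the left-hand supremum.
Near `x` we have `|F(x)| < |F(y)| + η`, hence `w(y)·|F(x)| ≤ w(y)·|F(y)| + M·η ≤ S + M·η`
on a whole neighbourhood of `x` inside `(A, B)`; taking the supremum over that neighbourhood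
bounds `M_w(x)·|F(x)|` by `S + M·η`, and `η → 0` gives the claim.
-/

open Set Filter Topology

noncomputable def upperEnvelope (w : ℝ → ℝ) (x : ℝ) : ℝ :=
  ⨅ δ : {δ : ℝ // 0 < δ}, sSup (w '' Ioo (x - δ.1) (x + δ.1))

section UpperEnvelope

variable {w : ℝ → ℝ}

lemma le_sSup_image_Ioo (hw : BddAbove (range w)) {x δ : ℝ} (hδ : 0 < δ) :
    w x ≤ sSup (w '' Ioo (x - δ) (x + δ)) :=
  le_csSup (hw.mono (image_subset_range _ _)) ⟨x, ⟨by linarith, by linarith⟩, rfl⟩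

lemma le_upperEnvelope (hw : BddAbove (range w)) (x : ℝ) : w x ≤ upperEnvelope w x :=
  le_ciInf fun δ => le_sSup_image_Ioo hw δ.2

lemma upperEnvelope_le_sSup_image_Ioo (hw : BddAbove (range w)) {x δ : ℝ} (hδ : 0 < δ) :
    upperEnvelope w x ≤ sSup (w '' Ioo (x - δ) (x + δ)) :=
  ciInf_le (f := fun δ : {δ : ℝ // 0 < δ} => sSup (w '' Ioo (x - δ.1) (x + δ.1)))
    ⟨w x, forall_mem_range.2 fun δ => le_sSup_image_Ioo hw δ.2⟩ ⟨δ, hδ⟩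

lemma sSup_image_mul_le {s : Set ℝ} (hs : s.Nonempty) {c b : ℝ} (hc : 0 ≤ c)
    (h : ∀ y ∈ s, w y * c ≤ b) : sSup (w '' s) * c ≤ b := by
  rcases hc.eq_or_lt with rfl | hc
  · obtain ⟨y, hy⟩ := hs
    simpa using h y hy
  · rw [← le_div_iff₀ hc]
    exact csSup_le (hs.image w) (forall_mem_image.2 fun y hy => (le_div_iff₀ hc).2 (h y hy))

lemma upperEnvelope_mul_le (hw : BddAbove (range w)) {x c b : ℝ} (hc : 0 ≤ c)
    (h : ∀ᶠ y in 𝓝 x, w y * c ≤ b) : upperEnvelope w x * c ≤ b := by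
  obtain ⟨δ, hδ, hball⟩ := Metric.eventually_nhds_iff_ball.1 h
  rw [Real.ball_eq_Ioo] at hball
  calc upperEnvelope w x * c ≤ sSup (w '' Ioo (x - δ) (x + δ)) * c :=
        mul_le_mul_of_nonneg_right (upperEnvelope_le_sSup_image_Ioo hw hδ) hc
    _ ≤ b := sSup_image_mul_le (nonempty_Ioo.2 (by linarith)) hc hball

variable {U : Set ℝ} {g : ℝ → ℝ}

lemma upperEnvelope_mul_le_sSup_image_mul (hU : IsOpen U) (h0 : ∀ x, 0 ≤ w x)
    (hw : BddAbove (range w)) (hg : ContinuousOn g U) (hg0 : ∀ x, 0 ≤ g x)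
    (hbdd : BddAbove ((fun x => w x * g x) '' U)) {x : ℝ} (hx : x ∈ U) :
    upperEnvelope w x * g x ≤ sSup ((fun x => w x * g x) '' U) := by
  set S := sSup ((fun x => w x * g x) '' U)
  obtain ⟨M, hM⟩ := hw
  have hclose : ∀ η > 0, upperEnvelope w x * g x ≤ S + M * η := by
    intro η hη
    have hgx : ∀ᶠ y in 𝓝 x, g x - η < g y :=
      (hg.continuousAt (hU.mem_nhds hx)).eventually (Ioi_mem_nhds (by linarith))
    refine upperEnvelope_mul_le ⟨M, hM⟩ (hg0 x) ?_
    filter_upwards [hU.mem_nhds hx, hgx] with y hyU hy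
    calc w y * g x ≤ w y * (g y + η) := mul_le_mul_of_nonneg_left (by linarith) (h0 y)
      _ = w y * g y + w y * η := mul_add _ _ _
      _ ≤ S + M * η := add_le_add (le_csSup hbdd (mem_image_of_mem _ hyU))
          (mul_le_mul_of_nonneg_right (hM (mem_range_self y)) hη.le)
  have hlim : Tendsto (fun η => S + M * η) (𝓝[>] 0) (𝓝 S) := by
    have h := ((continuous_const_mul M).const_add S).tendsto (0 : ℝ)
    rw [mul_zero, add_zero] at h
    exact h.mono_left nhdsWithin_le_nhds
  exact ge_of_tendsto hlim (eventually_nhdsWithin_of_forall hclose)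

theorem sSup_image_mul_eq_sSup_image_upperEnvelope_mul (hU : IsOpen U) (hne : U.Nonempty)
    (h0 : ∀ x, 0 ≤ w x) (hw : BddAbove (range w)) (hg : ContinuousOn g U)
    (hg0 : ∀ x, 0 ≤ g x) (hbdd : BddAbove ((fun x => w x * g x) '' U)) :
    sSup ((fun x => w x * g x) '' U) = sSup ((fun x => upperEnvelope w x * g x) '' U) := by
  have hle := fun x (hx : x ∈ U) => upperEnvelope_mul_le_sSup_image_mul hU h0 hw hg hg0 hbdd hx
  refine le_antisymm (csSup_le (hne.image _) ?_) (csSup_le (hne.image _) (forall_mem_image.2 hle))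
  rintro _ ⟨x, hx, rfl⟩
  exact (mul_le_mul_of_nonneg_right (le_upperEnvelope hw x) (hg0 x)).trans
    (le_csSup ⟨_, forall_mem_image.2 hle⟩ (mem_image_of_mem _ hx))

end UpperEnvelope

theorem stmt11_general (w : ℝ → ℝ) (hnn : ∀ x, 0 ≤ w x)
    (M : ℝ) (hbd : ∀ x, w x ≤ M)
    (F : ℝ → ℝ) (hF : Continuous F) (A B : ℝ) (hAB : A < B)
    (Mw : ℝ → ℝ)
    (hMw : ∀ x : ℝ, Mw x = ⨅ δ : {δ : ℝ // 0 < δ}, sSup (w '' Set.Ioo (x - δ.1) (x + δ.1))) :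
    sSup ((fun x => w x * |F x|) '' Set.Ioo A B)
      = sSup ((fun x => Mw x * |F x|) '' Set.Ioo A B) := by
  obtain rfl : Mw = upperEnvelope w := funext hMw
  obtain ⟨C, hC⟩ := (isCompact_Icc (a := A) (b := B)).exists_bound_of_continuousOn hF.continuousOn
  have hbdd : BddAbove ((fun x => w x * |F x|) '' Ioo A B) :=
    ⟨M * C, forall_mem_image.2 fun x hx => mul_le_mul (hbd x) (hC x (Ioo_subset_Icc_self hx))
      (abs_nonneg _) ((hnn x).trans (hbd x))⟩
  exact sSup_image_mul_eq_sSup_image_upperEnvelope_mul isOpen_Ioo (nonempty_Ioo.2 hAB) hnn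
    ⟨M, forall_mem_range.2 hbd⟩ hF.abs.continuousOn (fun x => abs_nonneg _) hbdd

theorem stmt11 (w : ℝ → ℝ) (hmeas : Measurable w) (hnn : ∀ x, 0 ≤ w x)
    (M : ℝ) (hbd : ∀ x, w x ≤ M)
    (F : ℝ → ℝ) (hF : Continuous F) (A B : ℝ) (hAB : A < B)
    (Mw : ℝ → ℝ)
    (hMw : ∀ x : ℝ, Mw x = ⨅ δ : {δ : ℝ // 0 < δ}, sSup (w '' Set.Ioo (x - δ.1) (x + δ.1))) :
    sSup ((fun x => w x * |F x|) '' Set.Ioo A B)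
      = sSup ((fun x => Mw x * |F x|) '' Set.Ioo A B) :=
  stmt11_general w hnn M hbd F hF A B hAB Mw hMw
end
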